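/- arXiv:math/0702481 — 2 statements merged into one kernel-verified Lean document; each statement's English description precedes it below -/
import Mathlib

section
/- As β → ∞, the limiting variance of the one-dimensional Dunkel–Hänggi relativistic diffusion satisfies Σ_β² ∼ 2/β; that is, lim_{β→∞} β · K_β / J_β = 2. -/
/-!
Write `s = √(1 + x²)` and `j_β(x) = e^{β(1 - s)}`. Since `d/dy e^{-k s(y)} = -k (y/s) e^{-k s(y)}`,
comparing the tail integrand `y j_β / (1 + y²) = (y/s) j_β / s` with exact derivatives gives
`j_β(x) / (β s + 1) ≤ I_β(x) ≤ j_β(x) / (β s)`, so `β² I_β² e^{β(s-1)}` lies between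
`j_β (β / (β s + 1))²` and `j_β / (1 + x²)`. Hence `√β J_β` and `√β β K_β / 2` are both squeezed
by Laplace integrals `√β ∫ j_β h_β` with weights `h_β ∈ [0, 1]` tending to `1` on the scale
`x ~ β^{-1/2}`, where `β (1 - s) ≈ -β x² / 2`. Substituting `x = t / √β`, dominated convergence
gives the common limit `∫₀^∞ e^{-t²/2} dt = √(π/2)`, and therefore `β K_β / J_β → 2`.
-/

open Filter MeasureTheory Set Topology Real

namespace DunkelHanggi

lemma one_le_sqrt_one_add_sq (x : ℝ) : 1 ≤ √(1 + x ^ 2) :=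
  Real.one_le_sqrt.2 (by nlinarith)

lemma le_sqrt_one_add_sq (x : ℝ) : x ≤ √(1 + x ^ 2) :=
  Real.le_sqrt_of_sq_le (by linarith)

lemma hasDerivAt_sqrt_one_add_sq (y : ℝ) :
    HasDerivAt (fun y : ℝ => √(1 + y ^ 2)) (y / √(1 + y ^ 2)) y := by
  have h := ((hasDerivAt_pow 2 y).const_add 1).sqrt (by positivity)
  convert h using 1
  field_simp
  ring

lemma tendsto_sqrt_one_add_sq_atTop : Tendsto (fun y : ℝ => √(1 + y ^ 2)) atTop atTop :=
  tendsto_atTop_mono le_sqrt_one_add_sq tendsto_id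

lemma mul_one_sub_sqrt_one_add (β : ℝ) {a : ℝ} (ha : 0 ≤ a) :
    β * (1 - √(1 + a)) = -(β * a / (√(1 + a) + 1)) := by
  have hsq : √(1 + a) ^ 2 = 1 + a := Real.sq_sqrt (by linarith)
  field_simp
  linear_combination (-β) * hsq

section ExpSubMulSqrt

variable (A : ℝ) {k : ℝ}

lemma hasDerivAt_exp_sub_mul_sqrt (hk : k ≠ 0) (y : ℝ) :
    HasDerivAt (fun y : ℝ => -exp (A - k * √(1 + y ^ 2)) / k)
      (y / √(1 + y ^ 2) * exp (A - k * √(1 + y ^ 2))) y := by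
  have h := ((((hasDerivAt_sqrt_one_add_sq y).const_mul k).const_sub A).exp.neg).div_const k
  exact h.congr_deriv (by field_simp)

lemma tendsto_exp_sub_mul_sqrt (hk : 0 < k) :
    Tendsto (fun y : ℝ => -exp (A - k * √(1 + y ^ 2)) / k) atTop (𝓝 0) := by
  have h : Tendsto (fun y : ℝ => A - k * √(1 + y ^ 2)) atTop atBot :=
    tendsto_atBot_add_const_left _ A
      (tendsto_neg_atTop_atBot.comp (tendsto_sqrt_one_add_sq_atTop.const_mul_atTop hk))
  simpa using (tendsto_exp_atBot.comp h).neg.div_const k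

variable {x : ℝ}

lemma mul_exp_sub_mul_sqrt_nonneg (hx : 0 ≤ x) {y : ℝ} (hy : y ∈ Ioi x) :
    0 ≤ y / √(1 + y ^ 2) * exp (A - k * √(1 + y ^ 2)) := by
  have : 0 ≤ y := hx.trans hy.out.le
  positivity

lemma integrableOn_mul_exp_sub_mul_sqrt (hk : 0 < k) (hx : 0 ≤ x) :
    IntegrableOn (fun y => y / √(1 + y ^ 2) * exp (A - k * √(1 + y ^ 2))) (Ioi x) :=
  integrableOn_Ioi_deriv_of_nonneg' (fun y _ => hasDerivAt_exp_sub_mul_sqrt A hk.ne' y)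
    (fun _ => mul_exp_sub_mul_sqrt_nonneg A hx) (tendsto_exp_sub_mul_sqrt A hk)

lemma integral_mul_exp_sub_mul_sqrt (hk : 0 < k) (hx : 0 ≤ x) :
    ∫ y in Ioi x, y / √(1 + y ^ 2) * exp (A - k * √(1 + y ^ 2))
      = exp (A - k * √(1 + x ^ 2)) / k := by
  rw [integral_Ioi_of_hasDerivAt_of_nonneg' (fun y _ => hasDerivAt_exp_sub_mul_sqrt A hk.ne' y)
    (fun _ => mul_exp_sub_mul_sqrt_nonneg A hx) (tendsto_exp_sub_mul_sqrt A hk)]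
  ring

end ExpSubMulSqrt

noncomputable def juttner (β x : ℝ) : ℝ := exp (β * (1 - √(1 + x ^ 2)))

noncomputable def tail (β x : ℝ) : ℝ := ∫ y in Ioi x, y * juttner β y / (1 + y ^ 2)

lemma juttner_pos (β x : ℝ) : 0 < juttner β x := exp_pos _

lemma juttner_eq_exp_sub (β x : ℝ) : juttner β x = exp (β - β * √(1 + x ^ 2)) := by
  rw [juttner, mul_one_sub]

lemma exp_mul_sqrt_sub_one (β x : ℝ) : exp (β * (√(1 + x ^ 2) - 1)) = (juttner β x)⁻¹ := by
  rw [juttner, ← exp_neg]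
  ring_nf

section Juttner

variable {β : ℝ}

lemma juttner_le (hβ : 0 ≤ β) (x : ℝ) : juttner β x ≤ exp β * exp (-β * x) := by
  rw [juttner, ← exp_add]
  gcongr
  nlinarith [mul_le_mul_of_nonneg_left (le_sqrt_one_add_sq x) hβ]

lemma integrableOn_juttner (hβ : 0 < β) : IntegrableOn (juttner β) (Ioi 0) := by
  refine ((exp_neg_integrableOn_Ioi 0 hβ).const_mul (exp β)).mono'
    (by unfold juttner; fun_prop) ?_
  filter_upwards with x
  rw [norm_of_nonneg (juttner_pos β x).le]
  simpa [neg_mul] using juttner_le hβ.le x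

lemma integrableOn_juttner_mul_inv (hβ : 0 < β) :
    IntegrableOn (fun x => juttner β x * (1 + x ^ 2)⁻¹) (Ioi 0) := by
  refine (integrableOn_juttner hβ).mono'
    (Measurable.aestronglyMeasurable (by unfold juttner; fun_prop)) ?_
  filter_upwards with x
  rw [norm_of_nonneg (by have := juttner_pos β x; positivity)]
  exact mul_le_of_le_one_right (juttner_pos β x).le (inv_le_one_of_one_le₀ (by nlinarith))

end Juttner

lemma exp_one_sub_le_inv {t : ℝ} (ht : 0 < t) : exp (1 - t) ≤ t⁻¹ := by
  rw [show 1 - t = -(t - 1) by ring, exp_neg]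
  exact inv_anti₀ ht (by linarith [add_one_le_exp (t - 1)])

section Tail

variable {β x : ℝ}

lemma tail_integrand_nonneg (hx : 0 ≤ x) {y : ℝ} (hy : y ∈ Ioi x) :
    0 ≤ y * juttner β y / (1 + y ^ 2) := by
  have : 0 ≤ y := hx.trans hy.out.le
  have := juttner_pos β y
  positivity

lemma integrableOn_tail_integrand (hβ : 0 < β) (hx : 0 ≤ x) :
    IntegrableOn (fun y => y * juttner β y / (1 + y ^ 2)) (Ioi x) := by
  refine ((integrableOn_juttner hβ).mono_set (Ioi_subset_Ioi hx)).mono'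
    (Measurable.aestronglyMeasurable (by unfold juttner; fun_prop)) ?_
  filter_upwards [ae_restrict_mem measurableSet_Ioi] with y hy
  rw [norm_of_nonneg (tail_integrand_nonneg hx hy), div_le_iff₀ (by positivity)]
  have := juttner_pos β y
  nlinarith [sq_nonneg (y - 1)]

lemma antitoneOn_tail (hβ : 0 < β) : AntitoneOn (tail β) (Ici 0) := fun _ ha _ _ hab =>
  setIntegral_mono_set (integrableOn_tail_integrand hβ ha)
    (ae_restrict_of_forall_mem measurableSet_Ioi fun _ hy => tail_integrand_nonneg ha hy)
    (Ioi_subset_Ioi hab).eventuallyLE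

lemma tail_le (hβ : 0 < β) (hx : 0 ≤ x) : tail β x ≤ juttner β x / (β * √(1 + x ^ 2)) := by
  set s := √(1 + x ^ 2)
  have hs : 0 < s := by positivity
  calc tail β x ≤ ∫ y in Ioi x, s⁻¹ * (y / √(1 + y ^ 2) * exp (β - β * √(1 + y ^ 2))) := by
        refine integral_mono_of_nonneg ?_
          ((integrableOn_mul_exp_sub_mul_sqrt β hβ hx).const_mul _) ?_
        · filter_upwards [ae_restrict_mem measurableSet_Ioi] with y hy
            using tail_integrand_nonneg hx hy
        filter_upwards [ae_restrict_mem measurableSet_Ioi] with y hy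
        have hy0 : 0 ≤ y := hx.trans hy.out.le
        have hsu : s ≤ √(1 + y ^ 2) := by
          have := hy.out; simp only [s]; gcongr
        rw [← juttner_eq_exp_sub]
        set u := √(1 + y ^ 2)
        have hu : 1 + y ^ 2 = u * u := (mul_self_sqrt (by positivity)).symm
        have := juttner_pos β y
        rw [hu, show s⁻¹ * (y / u * juttner β y) = y * juttner β y / (s * u) by field_simp]
        gcongr
    _ = juttner β x / (β * s) := by
        rw [integral_const_mul, integral_mul_exp_sub_mul_sqrt β hβ hx, juttner_eq_exp_sub]
        field_simp

lemma div_le_tail (hβ : 0 < β) (hx : 0 ≤ x) :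
    juttner β x / (β * √(1 + x ^ 2) + 1) ≤ tail β x := by
  set s := √(1 + x ^ 2)
  have hs : 0 < s := by positivity
  -- With `c = β + 1/s`, `exp (β + 1 - c u) = juttner β y * exp (1 - u/s)` for `u = √(1 + y²) ≥ s`,
  -- and `exp (1 - u/s) ≤ s/u` supplies the missing factor `1/u`.
  set c := β + s⁻¹
  calc juttner β x / (β * s + 1)
      = ∫ y in Ioi x, s⁻¹ * (y / √(1 + y ^ 2) * exp (β + 1 - c * √(1 + y ^ 2))) := by
        have hexp : exp (β + 1 - c * s) = juttner β x := by
          rw [juttner]; congr 1; simp only [c, s]; field_simp; ring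
        rw [integral_const_mul, integral_mul_exp_sub_mul_sqrt _ (by positivity) hx, hexp]
        simp only [c]
        field_simp
    _ ≤ tail β x := by
        refine integral_mono_of_nonneg ?_ (integrableOn_tail_integrand hβ hx) ?_
        · filter_upwards [ae_restrict_mem measurableSet_Ioi] with y hy
          have := mul_exp_sub_mul_sqrt_nonneg (β + 1) (k := c) hx hy
          positivity
        filter_upwards [ae_restrict_mem measurableSet_Ioi] with y hy
        have hy0 : 0 ≤ y := hx.trans hy.out.le
        have hsu : s ≤ √(1 + y ^ 2) := by
          have := hy.out; simp only [s]; gcongr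
        set u := √(1 + y ^ 2)
        have hu : 0 < u := hs.trans_le hsu
        have hsplit : exp (β + 1 - c * u) = juttner β y * exp (1 - u / s) := by
          rw [juttner, ← exp_add]; congr 1; simp only [c, u, s]; field_simp; ring
        have := juttner_pos β y
        calc s⁻¹ * (y / u * exp (β + 1 - c * u))
            = s⁻¹ * (y / u * juttner β y) * exp (1 - u / s) := by rw [hsplit]; ring
          _ ≤ s⁻¹ * (y / u * juttner β y) * (u / s)⁻¹ := by
            gcongr; exact exp_one_sub_le_inv (by positivity)
          _ = y * juttner β y / (1 + y ^ 2) := by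
            rw [← mul_self_sqrt (show 0 ≤ 1 + y ^ 2 by positivity)]; field_simp; rfl

end Tail

lemma juttner_inv_sqrt_mul {β : ℝ} (hβ : 0 < β) (t : ℝ) :
    juttner β ((√β)⁻¹ * t) = exp (-(t ^ 2 / (√(1 + t ^ 2 / β) + 1))) := by
  have hsq : ((√β)⁻¹ * t) ^ 2 = t ^ 2 / β := by
    rw [mul_pow, inv_pow, sq_sqrt hβ.le]; ring
  rw [juttner, hsq, mul_one_sub_sqrt_one_add β (by positivity)]
  field_simp

lemma juttner_inv_sqrt_mul_le {β : ℝ} (hβ : 1 ≤ β) (t : ℝ) :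
    juttner β ((√β)⁻¹ * t) ≤ juttner 1 t := by
  have h1 := juttner_inv_sqrt_mul one_pos t
  rw [sqrt_one, inv_one, one_mul, div_one] at h1
  rw [h1, juttner_inv_sqrt_mul (by linarith) t]
  gcongr
  exact div_le_self (sq_nonneg t) hβ

lemma tendsto_juttner_inv_sqrt_mul (t : ℝ) :
    Tendsto (fun β => juttner β ((√β)⁻¹ * t)) atTop (𝓝 (exp (-(1 / 2) * t ^ 2))) := by
  have hsqrt : Tendsto (fun β : ℝ => √(1 + t ^ 2 / β) + 1) atTop (𝓝 2) := by
    have := (((tendsto_const_nhds (x := t ^ 2)).div_atTop tendsto_id).const_add 1).sqrt.add_const 1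
    simpa [one_add_one_eq_two] using this
  have hexp := (((tendsto_const_nhds (x := t ^ 2)).div hsqrt two_ne_zero).neg).rexp
  rw [show -(1 / 2) * t ^ 2 = -(t ^ 2 / 2) by ring]
  refine hexp.congr' ?_
  filter_upwards [eventually_gt_atTop 0] with β hβ
  rw [juttner_inv_sqrt_mul hβ]
  rfl

lemma sqrt_mul_integral_eq_integral_inv_sqrt_mul {β : ℝ} (hβ : 0 < β) (f : ℝ → ℝ) :
    √β * ∫ x in Ioi 0, f x = ∫ t in Ioi 0, f ((√β)⁻¹ * t) := by
  rw [integral_comp_mul_left_Ioi f 0 (by positivity), mul_zero, inv_inv, smul_eq_mul]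

theorem tendsto_sqrt_mul_integral_juttner_mul {h : ℝ → ℝ → ℝ} (hmeas : ∀ β, Measurable (h β))
    (hbound : ∀ β ≥ 1, ∀ x > 0, h β x ∈ Icc 0 1)
    (hlim : ∀ t > 0, Tendsto (fun β => h β ((√β)⁻¹ * t)) atTop (𝓝 1)) :
    Tendsto (fun β => √β * ∫ x in Ioi 0, juttner β x * h β x) atTop (𝓝 √(π / 2)) := by
  have hgauss : ∫ t in Ioi 0, exp (-(1 / 2) * t ^ 2) = √(π / 2) := by
    rw [integral_gaussian_Ioi, div_eq_iff two_ne_zero, ← sqrt_sq zero_le_two, ← sqrt_mul]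
    · ring_nf
    · positivity
  rw [← hgauss]
  refine Tendsto.congr' ?_ (tendsto_integral_filter_of_dominated_convergence
    (F := fun β t => juttner β ((√β)⁻¹ * t) * h β ((√β)⁻¹ * t)) (juttner 1) ?_ ?_
    (integrableOn_juttner one_pos) ?_)
  · filter_upwards [eventually_gt_atTop 0] with β hβ
    exact (sqrt_mul_integral_eq_integral_inv_sqrt_mul hβ fun x => juttner β x * h β x).symm
  · filter_upwards with β
    exact (Measurable.mul (by unfold juttner; fun_prop) ((hmeas β).comp (by fun_prop)))
      |>.aestronglyMeasurable
  · filter_upwards [eventually_ge_atTop 1] with β hβ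
    filter_upwards [ae_restrict_mem measurableSet_Ioi] with t ht
    have hβ0 : 0 < β := by linarith
    have ht0 : 0 < t := ht
    obtain ⟨h0, h1⟩ := hbound β hβ ((√β)⁻¹ * t) (by positivity)
    rw [norm_mul, norm_of_nonneg (juttner_pos _ _).le, norm_of_nonneg h0]
    calc juttner β ((√β)⁻¹ * t) * h β ((√β)⁻¹ * t) ≤ juttner β ((√β)⁻¹ * t) :=
          mul_le_of_le_one_right (juttner_pos _ _).le h1
      _ ≤ juttner 1 t := juttner_inv_sqrt_mul_le hβ t
  · filter_upwards [ae_restrict_mem measurableSet_Ioi] with t ht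
    simpa using (tendsto_juttner_inv_sqrt_mul t).mul (hlim t ht)

lemma tendsto_one_add_sq_inv_sqrt_mul (t : ℝ) :
    Tendsto (fun β => 1 + ((√β)⁻¹ * t) ^ 2) atTop (𝓝 1) := by
  simpa using
    (((tendsto_inv_atTop_zero.comp tendsto_sqrt_atTop).mul_const t).pow 2).const_add 1

lemma tendsto_sqrt_one_add_sq_inv_sqrt_mul (t : ℝ) :
    Tendsto (fun β => √(1 + ((√β)⁻¹ * t) ^ 2)) atTop (𝓝 1) := by
  simpa using (tendsto_one_add_sq_inv_sqrt_mul t).sqrt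

noncomputable def J (β : ℝ) : ℝ := ∫ z in Ioi 0, juttner β z / √(1 + z ^ 2)

noncomputable def K (β : ℝ) : ℝ :=
  2 * β * ∫ x in Ioi 0, tail β x ^ 2 * exp (β * (√(1 + x ^ 2) - 1))

lemma tendsto_sqrt_mul_J : Tendsto (fun β => √β * J β) atTop (𝓝 √(π / 2)) := by
  have h := tendsto_sqrt_mul_integral_juttner_mul (h := fun _ x => (√(1 + x ^ 2))⁻¹)
    (fun _ => by fun_prop)
    (fun _ _ x _ => ⟨by positivity, inv_le_one_of_one_le₀ (one_le_sqrt_one_add_sq x)⟩)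
    (fun t _ => by simpa using (tendsto_sqrt_one_add_sq_inv_sqrt_mul t).inv₀ one_ne_zero)
  simpa only [J, div_eq_mul_inv] using h

section KIntegrand

variable {β x : ℝ}

lemma juttner_mul_sq_le_K_integrand (hβ : 0 < β) (hx : 0 ≤ x) :
    juttner β x * (β / (β * √(1 + x ^ 2) + 1)) ^ 2
      ≤ β ^ 2 * (tail β x ^ 2 * exp (β * (√(1 + x ^ 2) - 1))) := by
  have hj := juttner_pos β x
  have hlow := div_le_tail hβ hx
  rw [exp_mul_sqrt_sub_one]
  calc juttner β x * (β / (β * √(1 + x ^ 2) + 1)) ^ 2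
      = β ^ 2 * ((juttner β x / (β * √(1 + x ^ 2) + 1)) ^ 2 * (juttner β x)⁻¹) := by
        field_simp
    _ ≤ β ^ 2 * (tail β x ^ 2 * (juttner β x)⁻¹) := by gcongr

lemma K_integrand_le_juttner_mul_inv (hβ : 0 < β) (hx : 0 ≤ x) :
    β ^ 2 * (tail β x ^ 2 * exp (β * (√(1 + x ^ 2) - 1))) ≤ juttner β x * (1 + x ^ 2)⁻¹ := by
  have hj := juttner_pos β x
  have htail : 0 ≤ tail β x := (div_nonneg hj.le (by positivity)).trans (div_le_tail hβ hx)
  rw [exp_mul_sqrt_sub_one]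
  calc β ^ 2 * (tail β x ^ 2 * (juttner β x)⁻¹)
      ≤ β ^ 2 * ((juttner β x / (β * √(1 + x ^ 2))) ^ 2 * (juttner β x)⁻¹) := by
        gcongr; exact tail_le hβ hx
    _ = juttner β x * (1 + x ^ 2)⁻¹ := by
        rw [div_pow, mul_pow, sq_sqrt (by positivity)]
        field_simp

lemma integrableOn_K_integrand (hβ : 0 < β) :
    IntegrableOn (fun x => β ^ 2 * (tail β x ^ 2 * exp (β * (√(1 + x ^ 2) - 1)))) (Ioi 0) := by
  have hmeas : AEStronglyMeasurable (tail β) (volume.restrict (Ioi 0)) :=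
    (aemeasurable_restrict_of_antitoneOn measurableSet_Ioi
      ((antitoneOn_tail hβ).mono Ioi_subset_Ici_self)).aestronglyMeasurable
  refine (integrableOn_juttner_mul_inv hβ).mono' ((hmeas.pow 2).mul
    (by fun_prop : Continuous _).aestronglyMeasurable |>.const_mul _) ?_
  filter_upwards [ae_restrict_mem measurableSet_Ioi] with x hx
  rw [norm_of_nonneg (by positivity)]
  exact K_integrand_le_juttner_mul_inv hβ hx.out.le

end KIntegrand

lemma tendsto_sqrt_mul_integral_K_integrand :
    Tendsto (fun β => √β * ∫ x in Ioi 0, β ^ 2 * (tail β x ^ 2 * exp (β * (√(1 + x ^ 2) - 1))))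
      atTop (𝓝 √(π / 2)) := by
  have hlow_mem (β : ℝ) (hβ : β ≥ 1) (x : ℝ) (_ : x > 0) :
      (β / (β * √(1 + x ^ 2) + 1)) ^ 2 ∈ Icc 0 1 := by
    have : 0 < β * √(1 + x ^ 2) + 1 := by positivity
    refine ⟨by positivity, pow_le_one₀ (by positivity) ((div_le_one this).2 ?_)⟩
    nlinarith [one_le_sqrt_one_add_sq x]
  have hlow_lim (t : ℝ) (_ : t > 0) :
      Tendsto (fun β => (β / (β * √(1 + ((√β)⁻¹ * t) ^ 2) + 1)) ^ 2) atTop (𝓝 1) := by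
    have h := (((tendsto_sqrt_one_add_sq_inv_sqrt_mul t).add tendsto_inv_atTop_zero).inv₀
      (by norm_num)).pow 2
    rw [add_zero, inv_one, one_pow] at h
    refine h.congr' ?_
    filter_upwards [eventually_gt_atTop 0] with β hβ
    field_simp
  have hlow := tendsto_sqrt_mul_integral_juttner_mul (fun _ => by fun_prop) hlow_mem hlow_lim
  have hhigh := tendsto_sqrt_mul_integral_juttner_mul (h := fun _ x => (1 + x ^ 2)⁻¹)
    (fun _ => by fun_prop)
    (fun _ _ x _ => ⟨by positivity, inv_le_one_of_one_le₀ (by nlinarith)⟩)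
    (fun t _ => by simpa using (tendsto_one_add_sq_inv_sqrt_mul t).inv₀ one_ne_zero)
  refine tendsto_of_tendsto_of_tendsto_of_le_of_le' hlow hhigh ?_ ?_ <;>
    filter_upwards [eventually_gt_atTop 0] with β hβ <;>
    refine mul_le_mul_of_nonneg_left (integral_mono_of_nonneg ?_ ?_ ?_) (sqrt_nonneg β)
  · exact ae_restrict_of_forall_mem measurableSet_Ioi fun x _ => by
      have := juttner_pos β x; positivity
  · exact integrableOn_K_integrand hβ
  · exact ae_restrict_of_forall_mem measurableSet_Ioi fun x hx => juttner_mul_sq_le_K_integrand hβ hx.out.le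
  · exact ae_restrict_of_forall_mem measurableSet_Ioi fun x _ => by positivity
  · exact integrableOn_juttner_mul_inv hβ
  · exact ae_restrict_of_forall_mem measurableSet_Ioi fun x hx => K_integrand_le_juttner_mul_inv hβ hx.out.le

lemma tendsto_sqrt_mul_mul_K : Tendsto (fun β => √β * (β * K β)) atTop (𝓝 (2 * √(π / 2))) := by
  refine (tendsto_sqrt_mul_integral_K_integrand.const_mul 2).congr fun β => ?_
  rw [K, integral_const_mul]
  ring

end DunkelHanggi

/-- As β → ∞, the limiting variance Σ_β² = K_β/J_β of the one-dimensional Dunkel–Hänggi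
diffusion satisfies Σ_β² ∼ 2/β, i.e. β K_β / J_β → 2. -/
theorem stmt17 :
    Tendsto (fun β : ℝ => β *
        (2 * β * ∫ x in Ioi (0:ℝ),
          (∫ y in Ioi x, y * Real.exp (β * (1 - Real.sqrt (1 + y ^ 2))) / (1 + y ^ 2)) ^ 2
            * Real.exp (β * (Real.sqrt (1 + x ^ 2) - 1)))
        / ∫ z in Ioi (0:ℝ), Real.exp (β * (1 - Real.sqrt (1 + z ^ 2))) / Real.sqrt (1 + z ^ 2))
      atTop (nhds 2) := by
  have hc : √(π / 2) ≠ 0 := by positivity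
  have h := DunkelHanggi.tendsto_sqrt_mul_mul_K.div DunkelHanggi.tendsto_sqrt_mul_J hc
  rw [mul_div_cancel_right₀ _ hc] at h
  refine h.congr' ?_
  filter_upwards [eventually_gt_atTop 0] with β hβ
  exact mul_div_mul_left (β * DunkelHanggi.K β) (DunkelHanggi.J β) (sqrt_pos.2 hβ).ne'
end

section
/- For every β > 0 and every x ≥ 0, one has the integration-by-parts identity I_β(x) = e^{β(1−√(1+x²))} / (β √(1+x²)) − R_β(x), where R_β(x) := (1/β) ∫_x^∞ y e^{β(1−√(1+y²))} / (1+y²)^{3/2} dy satisfies 0 ≤ R_β(x) ≤ e^{β(1−√(1+x²))} / (β² (1+x²)). -/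
/-!
Write `s = √(1 + y²)` and `w = e^{β(1 - s)}`, so that `w' = -β (y / s) w`. Then `-w / β` is an
antiderivative of `y w / s`, and `-w / (β s)` one of `y w / s² + y w / (β s³)`. Both vanish at
infinity and the integrands are nonnegative on `[x, ∞)`, so the fundamental theorem of calculus
evaluates both improper integrals; the second one is the identity. For the bound,
`y w / s³ = (y w / s) / (1 + y²) ≤ (y w / s) / (1 + x²)` when `y ≥ x ≥ 0`, and
`∫_x^∞ y w / s = w(x) / β`.
-/

open Filter MeasureTheory Set Topology

noncomputable def juttnerWeight (β y : ℝ) : ℝ := Real.exp (β * (1 - √(1 + y ^ 2)))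

lemma one_add_sq_rpow_three_halves (y : ℝ) :
    (1 + y ^ 2) ^ ((3 : ℝ) / 2) = √(1 + y ^ 2) * (1 + y ^ 2) := by
  rw [Real.rpow_div_two_eq_sqrt 3 (by positivity), show (3 : ℝ) = (3 : ℕ) by norm_num,
    Real.rpow_natCast, pow_succ', Real.sq_sqrt (by positivity)]

lemma sqrt_one_add_sq_le (y : ℝ) : √(1 + y ^ 2) ≤ 1 + y ^ 2 :=
  (Real.sqrt_le_left (by positivity)).2 (by nlinarith [sq_nonneg y])

lemma hasDerivAt_sqrt_one_add_sq (y : ℝ) :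
    HasDerivAt (fun y => √(1 + y ^ 2)) (y / √(1 + y ^ 2)) y := by
  convert ((hasDerivAt_pow 2 y).const_add 1).sqrt (by positivity) using 1
  field_simp
  push_cast
  ring

lemma tendsto_sqrt_one_add_sq_atTop : Tendsto (fun y : ℝ => √(1 + y ^ 2)) atTop atTop :=
  tendsto_atTop_mono (fun y => (le_abs_self y).trans_eq (Real.sqrt_sq_eq_abs y).symm |>.trans
    (Real.sqrt_le_sqrt (by linarith))) tendsto_id

lemma hasDerivAt_juttnerWeight (β y : ℝ) :
    HasDerivAt (juttnerWeight β) (juttnerWeight β y * (β * -(y / √(1 + y ^ 2)))) y :=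
  (((hasDerivAt_sqrt_one_add_sq y).const_sub 1).const_mul β).exp

section

variable {β : ℝ}

@[fun_prop]
lemma continuous_juttnerWeight : Continuous (juttnerWeight β) := by
  unfold juttnerWeight; fun_prop

lemma tendsto_juttnerWeight_atTop (hβ : 0 < β) : Tendsto (juttnerWeight β) atTop (𝓝 0) := by
  refine Real.tendsto_exp_atBot.comp (Tendsto.const_mul_atBot hβ ?_)
  simpa only [sub_eq_add_neg] using
    tendsto_atBot_add_const_left _ 1 (tendsto_neg_atBot_iff.2 tendsto_sqrt_one_add_sq_atTop)

lemma mul_juttnerWeight_nonneg {y : ℝ} (hy : 0 ≤ y) : 0 ≤ y * juttnerWeight β y :=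
  mul_nonneg hy (Real.exp_pos _).le

lemma hasDerivAt_neg_juttnerWeight_div (hβ : β ≠ 0) (y : ℝ) :
    HasDerivAt (fun y => -juttnerWeight β y / β) (y * juttnerWeight β y / √(1 + y ^ 2)) y := by
  refine ((hasDerivAt_juttnerWeight β y).neg.div_const β).congr_deriv ?_
  field_simp

lemma hasDerivAt_neg_juttnerWeight_div_mul_sqrt (hβ : β ≠ 0) (y : ℝ) :
    HasDerivAt (fun y => -juttnerWeight β y / (β * √(1 + y ^ 2)))
      (y * juttnerWeight β y / (1 + y ^ 2) +
        1 / β * (y * juttnerWeight β y / (1 + y ^ 2) ^ ((3 : ℝ) / 2))) y := by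
  have hs : √(1 + y ^ 2) ≠ 0 := (Real.sqrt_pos.2 (by positivity)).ne'
  refine ((hasDerivAt_juttnerWeight β y).neg.div ((hasDerivAt_sqrt_one_add_sq y).const_mul β)
    (mul_ne_zero hβ hs)).congr_deriv ?_
  rw [one_add_sq_rpow_three_halves]
  have hs2 : √(1 + y ^ 2) ^ 2 = 1 + y ^ 2 := Real.sq_sqrt (by positivity)
  simp only [Pi.neg_apply]
  field_simp
  rw [hs2]
  ring

end

section

variable {β x : ℝ} (hβ : 0 < β) (hx : 0 ≤ x)
include hβ hx

lemma integrableOn_mul_juttnerWeight_div_sqrt :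
    IntegrableOn (fun y => y * juttnerWeight β y / √(1 + y ^ 2)) (Ioi x) :=
  integrableOn_Ioi_deriv_of_nonneg' (fun y _ => hasDerivAt_neg_juttnerWeight_div hβ.ne' y)
    (fun y hy => div_nonneg (mul_juttnerWeight_nonneg (hx.trans hy.out.le)) (Real.sqrt_nonneg _))
    (by simpa using (tendsto_juttnerWeight_atTop hβ).neg.div_const β)

lemma integral_mul_juttnerWeight_div_sqrt :
    ∫ y in Ioi x, y * juttnerWeight β y / √(1 + y ^ 2) = juttnerWeight β x / β := by
  rw [integral_Ioi_of_hasDerivAt_of_nonneg' (fun y _ => hasDerivAt_neg_juttnerWeight_div hβ.ne' y)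
    (fun y hy => div_nonneg (mul_juttnerWeight_nonneg (hx.trans hy.out.le)) (Real.sqrt_nonneg _))
    (by simpa using (tendsto_juttnerWeight_atTop hβ).neg.div_const β)]
  ring

lemma integrableOn_of_le_mul_juttnerWeight_div_sqrt {f : ℝ → ℝ} (hf : Measurable f)
    (hf₀ : ∀ y ∈ Ioi x, 0 ≤ f y)
    (hf_le : ∀ y ∈ Ioi x, f y ≤ y * juttnerWeight β y / √(1 + y ^ 2)) :
    IntegrableOn f (Ioi x) :=
  integrable_of_le_of_le (g₁ := 0) hf.aestronglyMeasurable
    ((ae_restrict_mem measurableSet_Ioi).mono hf₀)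
    ((ae_restrict_mem measurableSet_Ioi).mono hf_le)
    (integrable_zero _ _ _) (integrableOn_mul_juttnerWeight_div_sqrt hβ hx)

lemma integrableOn_mul_juttnerWeight_div_one_add_sq :
    IntegrableOn (fun y => y * juttnerWeight β y / (1 + y ^ 2)) (Ioi x) := by
  refine integrableOn_of_le_mul_juttnerWeight_div_sqrt hβ hx (by fun_prop) (fun y hy => ?_)
    (fun y hy => ?_) <;> have hy₀ := mul_juttnerWeight_nonneg (β := β) (hx.trans hy.out.le)
  · positivity
  · exact div_le_div_of_nonneg_left hy₀ (by positivity) (sqrt_one_add_sq_le y)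

lemma integrableOn_mul_juttnerWeight_div_rpow :
    IntegrableOn (fun y => y * juttnerWeight β y / (1 + y ^ 2) ^ ((3 : ℝ) / 2)) (Ioi x) := by
  refine integrableOn_of_le_mul_juttnerWeight_div_sqrt hβ hx (by fun_prop) (fun y hy => ?_)
    (fun y hy => ?_) <;> have hy₀ := mul_juttnerWeight_nonneg (β := β) (hx.trans hy.out.le)
  · positivity
  · rw [one_add_sq_rpow_three_halves, ← div_div]
    exact div_le_self (by positivity) (by nlinarith [sq_nonneg y])

lemma integral_add_mul_juttnerWeight_div_rpow :
    ∫ y in Ioi x, (y * juttnerWeight β y / (1 + y ^ 2) +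
        1 / β * (y * juttnerWeight β y / (1 + y ^ 2) ^ ((3 : ℝ) / 2))) =
      juttnerWeight β x / (β * √(1 + x ^ 2)) := by
  have hlim : Tendsto (fun y => -juttnerWeight β y / (β * √(1 + y ^ 2))) atTop (𝓝 0) := by
    simpa using (tendsto_juttnerWeight_atTop hβ).neg.div_atTop
      (tendsto_sqrt_one_add_sq_atTop.const_mul_atTop hβ)
  rw [integral_Ioi_of_hasDerivAt_of_nonneg'
    (fun y _ => hasDerivAt_neg_juttnerWeight_div_mul_sqrt hβ.ne' y) (fun y hy => ?_) hlim]
  · ring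
  · have hy₀ := mul_juttnerWeight_nonneg (β := β) (hx.trans hy.out.le)
    positivity

lemma integral_mul_juttnerWeight_div_rpow_le :
    ∫ y in Ioi x, y * juttnerWeight β y / (1 + y ^ 2) ^ ((3 : ℝ) / 2) ≤
      juttnerWeight β x / β / (1 + x ^ 2) := by
  rw [← integral_mul_juttnerWeight_div_sqrt hβ hx, ← integral_div]
  refine setIntegral_mono_on (integrableOn_mul_juttnerWeight_div_rpow hβ hx)
    ((integrableOn_mul_juttnerWeight_div_sqrt hβ hx).div_const _) measurableSet_Ioi
    (fun y hy => ?_)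
  have hy₀ := mul_juttnerWeight_nonneg (β := β) (hx.trans hy.out.le)
  have hxy : x ^ 2 ≤ y ^ 2 := pow_le_pow_left₀ hx hy.out.le 2
  rw [one_add_sq_rpow_three_halves, ← div_div]
  exact div_le_div_of_nonneg_left (by positivity) (by positivity) (by linarith)

end

/-- Integration by parts for I_β: for β > 0 and x ≥ 0,
I_β(x) = e^{β(1−√(1+x²))}/(β√(1+x²)) − R_β(x), where
R_β(x) = (1/β) ∫_x^∞ y e^{β(1−√(1+y²))}/(1+y²)^{3/2} dy satisfies
0 ≤ R_β(x) ≤ e^{β(1−√(1+x²))}/(β²(1+x²)). -/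
theorem stmt19 (β : ℝ) (hβ : 0 < β) (x : ℝ) (hx : 0 ≤ x)
    (I R : ℝ → ℝ)
    (hI : ∀ t, I t = ∫ y in Ioi t, y * Real.exp (β * (1 - Real.sqrt (1 + y ^ 2))) / (1 + y ^ 2))
    (hR : ∀ t, R t = (1 / β) * ∫ y in Ioi t,
        y * Real.exp (β * (1 - Real.sqrt (1 + y ^ 2))) / (1 + y ^ 2) ^ ((3:ℝ)/2)) :
    I x = Real.exp (β * (1 - Real.sqrt (1 + x ^ 2))) / (β * Real.sqrt (1 + x ^ 2)) - R x ∧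
    0 ≤ R x ∧
    R x ≤ Real.exp (β * (1 - Real.sqrt (1 + x ^ 2))) / (β ^ 2 * (1 + x ^ 2)) := by
  have hw : ∀ y, Real.exp (β * (1 - √(1 + y ^ 2))) = juttnerWeight β y := fun _ => rfl
  have hsum := integral_add_mul_juttnerWeight_div_rpow hβ hx
  rw [integral_add (integrableOn_mul_juttnerWeight_div_one_add_sq hβ hx)
    ((integrableOn_mul_juttnerWeight_div_rpow hβ hx).const_mul _), integral_const_mul] at hsum
  have hnonneg : 0 ≤ ∫ y in Ioi x, y * juttnerWeight β y / (1 + y ^ 2) ^ ((3 : ℝ) / 2) :=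
    setIntegral_nonneg measurableSet_Ioi fun y hy =>
      div_nonneg (mul_juttnerWeight_nonneg (hx.trans hy.out.le)) (by positivity)
  have hbound := integral_mul_juttnerWeight_div_rpow_le hβ hx
  simp only [hI, hR, hw]
  refine ⟨by linarith, by positivity, ?_⟩
  calc 1 / β * ∫ y in Ioi x, y * juttnerWeight β y / (1 + y ^ 2) ^ ((3 : ℝ) / 2)
      ≤ 1 / β * (juttnerWeight β x / β / (1 + x ^ 2)) := by gcongr
    _ = juttnerWeight β x / (β ^ 2 * (1 + x ^ 2)) := by field_simp
end
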